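/- Let V be the Volterra integration operator on the complex Hilbert space L²(0,1), i.e. the bounded linear operator such that for every f ∈ L²(0,1), (V f)(x) = ∫₀ˣ f(t) dt for almost every x ∈ (0,1). Then the norm of its self-commutator is ‖V*V − VV*‖ = √3/6. -/

import Mathlib

/-!
Fubini's theorem on the triangle `{t < x}` (integration by parts) gives `V + V* = P`, the
orthogonal projection onto the constants, so `V*V - VV* = PV - VP = 1 ⊗ V*1 - V1 ⊗ 1` has rank two.
Since `V1 = x = 1/2 + (√3/6) e` with `e = √3 (2x - 1)` a unit vector orthogonal to `1`, the
self-commutator is `-(√3/6) (1 ⊗ e + e ⊗ 1)`, and the operator exchanging two orthonormal vectors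
has norm one.
-/

open MeasureTheory ContinuousLinearMap

/-- The Lebesgue measure restricted to the interval `(0,1)`. -/
noncomputable def mu01 : Measure ℝ := volume.restrict (Set.Ioo (0 : ℝ) 1)

open InnerProductSpace Set
open scoped InnerProductSpace ComplexConjugate

section
variable {𝕜 E : Type*} [RCLike 𝕜] [NormedAddCommGroup E] [InnerProductSpace 𝕜 E]

theorem norm_rankOne_add_rankOne_of_orthonormal {a b : E} (hab : Orthonormal 𝕜 ![a, b]) :
    ‖rankOne 𝕜 a b + rankOne 𝕜 b a‖ = 1 := by
  have ha : ‖a‖ = 1 := hab.1 0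
  have hb : ‖b‖ = 1 := hab.1 1
  have hab₀ : ⟪a, b⟫_𝕜 = 0 := hab.2 (i := 0) (j := 1) (by decide)
  have hba₀ : ⟪b, a⟫_𝕜 = 0 := hab.2 (i := 1) (j := 0) (by decide)
  refine le_antisymm (opNorm_le_bound _ zero_le_one fun f => ?_) ?_
  · have bessel := hab.sum_inner_products_le f (s := Finset.univ)
    simp only [Fin.sum_univ_two, Matrix.cons_val_zero, Matrix.cons_val_one] at bessel
    have pythagoras : ‖⟪b, f⟫_𝕜 • a + ⟪a, f⟫_𝕜 • b‖ ^ 2 = ‖⟪a, f⟫_𝕜‖ ^ 2 + ‖⟪b, f⟫_𝕜‖ ^ 2 := by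
      rw [@norm_add_sq 𝕜, inner_smul_left, inner_smul_right, hab₀, norm_smul, norm_smul, ha, hb]
      simp only [mul_zero, map_zero, mul_one]; ring
    rw [one_mul, ← sq_le_sq₀ (norm_nonneg _) (norm_nonneg _)]
    simpa [pythagoras] using bessel
  · simpa [ha, hb, hba₀] using le_opNorm (rankOne 𝕜 a b + rankOne 𝕜 b a) a
end

section
variable {𝕜 : Type*} [RCLike 𝕜] {μ : Measure ℝ} [SFinite μ] {F G : ℝ → 𝕜}

theorem integral_setIntegral_Iio_mul (hF : Integrable F μ) (hG : Integrable G μ) :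
    ∫ x, (∫ t in Iio x, F t ∂μ) * G x ∂μ =
      ∫ p, {p : ℝ × ℝ | p.2 < p.1}.indicator (fun p => G p.1 * F p.2) p ∂μ.prod μ := by
  rw [integral_prod _ ((hG.mul_prod hF).indicator (measurableSet_lt measurable_snd measurable_fst))]
  refine integral_congr_ae (ae_of_all _ fun x => ?_)
  dsimp only
  rw [mul_comm, ← integral_const_mul, ← integral_indicator measurableSet_Iio]
  rfl

theorem integral_mul_setIntegral_Iio (hF : Integrable F μ) (hG : Integrable G μ) :
    ∫ x, F x * (∫ t in Iio x, G t ∂μ) ∂μ =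
      ∫ p, {p : ℝ × ℝ | p.1 < p.2}.indicator (fun p => G p.1 * F p.2) p ∂μ.prod μ := by
  simp_rw [mul_comm (F _)]
  rw [integral_setIntegral_Iio_mul hG hF, ← integral_prod_swap]
  congr with p
  simp [indicator, mul_comm]

theorem ae_prod_fst_ne_snd [NullSingletonClass μ] : ∀ᵐ p ∂μ.prod μ, p.1 ≠ p.2 := by
  refine (Measure.ae_prod_iff_ae_ae
    (measurableSet_eq_fun measurable_fst measurable_snd).compl).2 ?_
  exact ae_of_all _ fun x => (μ.ae_ne x).mono fun _ h => h.symm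

theorem integral_setIntegral_Iio_mul_add [NullSingletonClass μ] (hF : Integrable F μ)
    (hG : Integrable G μ) :
    ∫ x, (∫ t in Iio x, F t ∂μ) * G x ∂μ + ∫ x, F x * (∫ t in Iio x, G t ∂μ) ∂μ =
      (∫ x, F x ∂μ) * ∫ x, G x ∂μ := by
  have hGF := hG.mul_prod hF
  rw [integral_setIntegral_Iio_mul hF hG, integral_mul_setIntegral_Iio hF hG,
    ← integral_add (hGF.indicator (measurableSet_lt measurable_snd measurable_fst))
      (hGF.indicator (measurableSet_lt measurable_fst measurable_snd)),
    mul_comm, ← integral_prod_mul]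
  refine integral_congr_ae ?_
  filter_upwards [ae_prod_fst_ne_snd] with p hp
  rcases hp.lt_or_gt with h | h <;> simp [indicator, h, h.not_gt]
end

section
variable {𝕜 E : Type*} [RCLike 𝕜] [NormedAddCommGroup E] [InnerProductSpace 𝕜 E] [CompleteSpace E]

theorem adjoint_comp_sub_comp_adjoint_of_add_adjoint_eq_rankOne {V : E →L[𝕜] E} {u : E}
    (h : V + adjoint V = rankOne 𝕜 u u) :
    adjoint V ∘L V - V ∘L adjoint V = rankOne 𝕜 u (adjoint V u) - rankOne 𝕜 (V u) u := calc
  _ = rankOne 𝕜 u u ∘L V - V ∘L rankOne 𝕜 u u := by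
    rw [← h, add_comp, comp_add]; abel
  _ = _ := by rw [rankOne_comp, comp_rankOne]
end

instance : IsProbabilityMeasure mu01 := ⟨by simp [mu01]⟩

instance : NullSingletonClass mu01 := inferInstanceAs (NullSingletonClass (volume.restrict _))

theorem mu01_restrict_Iio {x : ℝ} (hx : x ∈ Ioo (0 : ℝ) 1) :
    mu01.restrict (Iio x) = volume.restrict (Ioo 0 x) := by
  rw [mu01, Measure.restrict_restrict measurableSet_Iio, inter_comm, Ioo_inter_Iio,
    min_eq_right hx.2.le]

theorem integral_mu01_pow (n : ℕ) : ∫ x, (x : ℂ) ^ n ∂mu01 = 1 / (n + 1) := by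
  simp_rw [← Complex.ofReal_pow]
  rw [mu01, ← integral_Ioc_eq_integral_Ioo, ← intervalIntegral.integral_of_le zero_le_one,
    intervalIntegral.integral_ofReal, integral_pow]
  push_cast; ring

noncomputable def oneL2 : Lp ℂ 2 mu01 := Lp.const 2 mu01 1

theorem memLp_ofReal_mu01 : MemLp (fun x : ℝ => (x : ℂ)) 2 mu01 := by
  refine MemLp.of_bound Complex.continuous_ofReal.aestronglyMeasurable 1 ?_
  filter_upwards [ae_restrict_mem measurableSet_Ioo] with x hx
  rw [Complex.norm_real, Real.norm_of_nonneg hx.1.le]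
  exact hx.2.le

noncomputable def rampL2 : Lp ℂ 2 mu01 := memLp_ofReal_mu01.toLp _

theorem coeFn_oneL2 : oneL2 =ᵐ[mu01] fun _ => (1 : ℂ) := Lp.coeFn_const 2 mu01 1

theorem coeFn_rampL2 : rampL2 =ᵐ[mu01] fun x => (x : ℂ) := memLp_ofReal_mu01.coeFn_toLp

theorem inner_oneL2_left (f : Lp ℂ 2 mu01) : ⟪oneL2, f⟫_ℂ = ∫ x, f x ∂mu01 := by
  rw [L2.inner_def]
  refine integral_congr_ae ?_
  filter_upwards [coeFn_oneL2] with x hx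
  simp [hx]

theorem inner_oneL2_oneL2 : ⟪oneL2, oneL2⟫_ℂ = 1 := by
  rw [inner_oneL2_left, integral_congr_ae coeFn_oneL2]
  simp

theorem inner_oneL2_rampL2 : ⟪oneL2, rampL2⟫_ℂ = 1 / 2 := by
  rw [inner_oneL2_left, integral_congr_ae coeFn_rampL2]
  convert integral_mu01_pow 1 using 1 <;> norm_num

theorem inner_rampL2_rampL2 : ⟪rampL2, rampL2⟫_ℂ = 1 / 3 := by
  rw [L2.inner_def]
  convert integral_mu01_pow 2 using 1
  · refine integral_congr_ae ?_
    filter_upwards [coeFn_rampL2] with x hx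
    rw [hx, RCLike.inner_apply, Complex.conj_ofReal, sq]
  · norm_num

def IsVolterraOperator (V : Lp ℂ 2 mu01 →L[ℂ] Lp ℂ 2 mu01) : Prop :=
  ∀ f : Lp ℂ 2 mu01, ∀ᵐ x ∂mu01, V f x = ∫ t in Ioo (0 : ℝ) x, f t

namespace IsVolterraOperator

variable {V : Lp ℂ 2 mu01 →L[ℂ] Lp ℂ 2 mu01} (hV : IsVolterraOperator V)
include hV

theorem ae_eq_setIntegral_Iio (f : Lp ℂ 2 mu01) :
    ∀ᵐ x ∂mu01, V f x = ∫ t in Iio x, f t ∂mu01 := by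
  filter_upwards [hV f, ae_restrict_mem measurableSet_Ioo] with x hx hx01
  rw [hx, mu01_restrict_Iio hx01]

theorem inner_apply_add_inner_apply (f g : Lp ℂ 2 mu01) :
    ⟪V f, g⟫_ℂ + ⟪f, V g⟫_ℂ = ⟪f, oneL2⟫_ℂ * ⟪oneL2, g⟫_ℂ := by
  have hf : Integrable (fun x => conj (f x)) mu01 :=
    Complex.conjCLE.toContinuousLinearMap.integrable_comp ((Lp.memLp f).integrable one_le_two)
  rw [← inner_conj_symm f oneL2, inner_oneL2_left, inner_oneL2_left, ← integral_conj, L2.inner_def,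
    L2.inner_def, ← integral_setIntegral_Iio_mul_add hf ((Lp.memLp g).integrable one_le_two)]
  congr 1 <;> refine integral_congr_ae ?_
  · filter_upwards [hV.ae_eq_setIntegral_Iio f] with x hx
    rw [RCLike.inner_apply, hx, integral_conj, mul_comm]
  · filter_upwards [hV.ae_eq_setIntegral_Iio g] with x hx
    rw [RCLike.inner_apply, hx, mul_comm]

theorem add_adjoint : V + adjoint V = rankOne ℂ oneL2 oneL2 := by
  rw [← eq_sub_iff_add_eq', eq_comm, eq_adjoint_iff]
  intro f g
  rw [sub_apply, inner_sub_left, inner_left_rankOne_apply, ← hV.inner_apply_add_inner_apply]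
  ring

theorem apply_oneL2 : V oneL2 = rampL2 := by
  refine Lp.ext ?_
  filter_upwards [hV.ae_eq_setIntegral_Iio oneL2, coeFn_rampL2, ae_restrict_mem measurableSet_Ioo]
    with x hx hramp hx01
  rw [hx, hramp, integral_congr_ae (ae_restrict_of_ae coeFn_oneL2), mu01_restrict_Iio hx01]
  simp [hx01.1.le]

theorem adjoint_apply_oneL2 : adjoint V oneL2 = oneL2 - rampL2 := by
  rw [eq_sub_iff_add_eq', ← hV.apply_oneL2, ← add_apply, hV.add_adjoint, rankOne_apply,
    inner_oneL2_oneL2, one_smul]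

theorem selfCommutator_eq :
    adjoint V ∘L V - V ∘L adjoint V =
      rankOne ℂ oneL2 (oneL2 - rampL2) - rankOne ℂ rampL2 oneL2 := by
  rw [adjoint_comp_sub_comp_adjoint_of_add_adjoint_eq_rankOne hV.add_adjoint,
    hV.adjoint_apply_oneL2, hV.apply_oneL2]

end IsVolterraOperator

noncomputable def legendreL2 : Lp ℂ 2 mu01 := (√3 : ℂ) • ((2 : ℂ) • rampL2 - oneL2)

theorem ofReal_sqrt_three_mul_self : (√3 : ℂ) * √3 = 3 := by
  rw [← Complex.ofReal_mul, Real.mul_self_sqrt zero_le_three]; norm_num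

theorem inner_oneL2_legendreL2 : ⟪oneL2, legendreL2⟫_ℂ = 0 := by
  simp only [legendreL2, inner_smul_right, inner_sub_right, inner_oneL2_oneL2, inner_oneL2_rampL2]
  ring

theorem inner_legendreL2_legendreL2 : ⟪legendreL2, legendreL2⟫_ℂ = 1 := by
  have h_ramp_one : ⟪rampL2, oneL2⟫_ℂ = 1 / 2 := by
    rw [← inner_conj_symm, inner_oneL2_rampL2]; simp [map_ofNat]
  simp only [legendreL2, inner_smul_left, inner_smul_right, inner_sub_left, inner_sub_right,
    inner_oneL2_oneL2, inner_oneL2_rampL2, inner_rampL2_rampL2, h_ramp_one, Complex.conj_ofReal,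
    map_ofNat]
  linear_combination ofReal_sqrt_three_mul_self / 3

theorem orthonormal_oneL2_legendreL2 : Orthonormal ℂ ![oneL2, legendreL2] := by
  have h_legendre_one : ⟪legendreL2, oneL2⟫_ℂ = 0 := by
    rw [← inner_conj_symm, inner_oneL2_legendreL2, map_zero]
  rw [orthonormal_iff_ite]
  intro i j
  fin_cases i <;> fin_cases j
  · exact inner_oneL2_oneL2
  · exact inner_oneL2_legendreL2
  · exact h_legendre_one
  · exact inner_legendreL2_legendreL2

theorem rampL2_eq : rampL2 = (1 / 2 : ℂ) • oneL2 + (√3 / 6 : ℂ) • legendreL2 := by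
  rw [legendreL2, smul_smul,
    show (√3 / 6 : ℂ) * √3 = 1 / 2 by linear_combination ofReal_sqrt_three_mul_self / 6]
  module

theorem rankOne_oneL2_sub_rankOne_rampL2 :
    rankOne ℂ oneL2 (oneL2 - rampL2) - rankOne ℂ rampL2 oneL2 =
      -(√3 / 6 : ℂ) • (rankOne ℂ oneL2 legendreL2 + rankOne ℂ legendreL2 oneL2) := by
  rw [rampL2_eq]
  simp only [map_sub, map_add, map_smulₛₗ, add_apply, smul_apply, RingHom.id_apply, map_div₀,
    map_one, map_ofNat, Complex.conj_ofReal]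
  module

theorem volterra_selfCommutator_norm
    (V : Lp ℂ 2 mu01 →L[ℂ] Lp ℂ 2 mu01)
    (hV : ∀ f : Lp ℂ 2 mu01, ∀ᵐ x ∂mu01, V f x = ∫ t in Set.Ioo (0 : ℝ) x, f t) :
    ‖adjoint V ∘L V - V ∘L adjoint V‖ = Real.sqrt 3 / 6 := by
  rw [IsVolterraOperator.selfCommutator_eq hV, rankOne_oneL2_sub_rankOne_rampL2, norm_smul,
    norm_rankOne_add_rankOne_of_orthonormal orthonormal_oneL2_legendreL2, mul_one, norm_neg]
  simp
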